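/- arXiv:1808.09846 — 7 statements merged into one kernel-verified Lean document; each statement's English description precedes it below -/
import Mathlib

section
/- Let n be a positive integer and let a, b be integers with 1 ≤ b < a ≤ n. The number of sets {x₁, x₂, x₃, x₄} of four distinct integers in [1, n] satisfying x_i + x_j = x_k + x_l (for some pairing of the four elements) that contain both a and b is at least n/2 - 4. -/
/-- `S` is a Sidon 4-set in `[1,n]`: four distinct integers in `{1,...,n}` such that
the sum of some two of them equals the sum of the other two. -/
def IsSidonFourSet (n : ℕ) (S : Finset ℕ) : Prop :=
  (S : Set ℕ) ⊆ Set.Icc 1 n ∧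
    ∃ x₁ x₂ x₃ x₄ : ℕ, S = {x₁, x₂, x₃, x₄} ∧
      x₁ ≠ x₂ ∧ x₁ ≠ x₃ ∧ x₁ ≠ x₄ ∧ x₂ ≠ x₃ ∧ x₂ ≠ x₄ ∧ x₃ ≠ x₄ ∧
      x₁ + x₂ = x₃ + x₄

private lemma card_three_le (x y z : ℕ) : ({x, y, z} : Finset ℕ).card ≤ 3 := by
  apply le_trans (Finset.card_insert_le _ _)
  have : ({y, z} : Finset ℕ).card ≤ 2 := by
    apply le_trans (Finset.card_insert_le _ _)
    simp
  omega

private lemma card_two_le (x y : ℕ) : ({x, y} : Finset ℕ).card ≤ 2 := by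
  apply le_trans (Finset.card_insert_le _ _)
  simp

theorem stmt_0 (n a b : ℕ) (hn : 0 < n) (hb : 1 ≤ b) (hba : b < a) (han : a ≤ n) :
    (({S : Finset ℕ | IsSidonFourSet n S ∧ a ∈ S ∧ b ∈ S}.ncard : ℝ)) ≥
      (n : ℝ) / 2 - 4 := by
  set Tgt : Set (Finset ℕ) := {S : Finset ℕ | IsSidonFourSet n S ∧ a ∈ S ∧ b ∈ S} with hTgt
  -- the two index sets
  set T1 : Finset ℕ := (Finset.Icc (max 1 (a + b - n)) ((a + b - 1) / 2)).filter
      (fun x => x ≠ b) with hT1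
  set T2 : Finset ℕ := (Finset.Icc 1 (n - (a - b))).filter
      (fun x => x ≠ a ∧ x ≠ b ∧ x + (a - b) ≠ b) with hT2
  set f1 : ℕ → Finset ℕ := fun x => {a, b, x, a + b - x} with hf1
  set f2 : ℕ → Finset ℕ := fun x => {a, x, b, x + (a - b)} with hf2
  set F : Finset (Finset ℕ) := T1.image f1 ∪ T2.image f2 with hF
  -- basic facts about members of T1, T2
  have hmem1 : ∀ x ∈ T1, 1 ≤ x ∧ a + b - n ≤ x ∧ 2 * x ≤ a + b - 1 ∧ x ≠ b := by
    intro x hx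
    simp only [hT1, Finset.mem_filter, Finset.mem_Icc, max_le_iff, le_max_iff] at hx
    obtain ⟨⟨h1, h2⟩, h3⟩ := hx
    have : 2 * x ≤ a + b - 1 := by omega
    omega
  have hmem2 : ∀ x ∈ T2, 1 ≤ x ∧ x ≤ n - (a - b) ∧ x ≠ a ∧ x ≠ b ∧ x + (a - b) ≠ b := by
    intro x hx
    simp only [hT2, Finset.mem_filter, Finset.mem_Icc] at hx
    tauto
  -- every member of F is in the target set
  have hFsub : (F : Set (Finset ℕ)) ⊆ Tgt := by
    intro S hS
    simp only [hF, Finset.coe_union, Set.mem_union, Finset.coe_image, Set.mem_image,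
      Finset.mem_coe] at hS
    rcases hS with ⟨x, hx, rfl⟩ | ⟨x, hx, rfl⟩
    · obtain ⟨h1, h2, h3, h4⟩ := hmem1 x hx
      refine ⟨⟨?_, a, b, x, a + b - x, rfl, ?_, ?_, ?_, ?_, ?_, ?_, ?_⟩, ?_, ?_⟩
      · intro y hy
        simp only [hf1, Finset.coe_insert, Set.mem_insert_iff, Finset.coe_singleton,
          Finset.mem_coe, Finset.mem_insert, Finset.mem_singleton] at hy
        simp only [Set.mem_Icc]
        rcases hy with rfl | rfl | rfl | rfl <;> omega
      all_goals first
        | omega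
        | (simp [hf1])
    · obtain ⟨h1, h2, h3, h4, h5⟩ := hmem2 x hx
      have hdn : a - b ≤ n := by omega
      refine ⟨⟨?_, a, x, b, x + (a - b), rfl, ?_, ?_, ?_, ?_, ?_, ?_, ?_⟩, ?_, ?_⟩
      · intro y hy
        simp only [hf2, Finset.coe_insert, Set.mem_insert_iff, Finset.coe_singleton,
          Finset.mem_coe, Finset.mem_insert, Finset.mem_singleton] at hy
        simp only [Set.mem_Icc]
        rcases hy with rfl | rfl | rfl | rfl <;> omega
      all_goals first
        | omega
        | (simp [hf2])
  -- the target set is finite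
  have hTfin : Tgt.Finite := by
    apply Set.Finite.subset ((Finset.Icc 1 n).powerset.finite_toSet)
    intro S hS
    simp only [hTgt, Set.mem_setOf_eq] at hS
    simp only [Finset.coe_powerset, Set.mem_preimage, Set.mem_powerset_iff,
      Finset.coe_Icc]
    exact hS.1.1
  -- injectivity
  have hinj1 : Set.InjOn f1 T1 := by
    intro x hx y hy hxy
    obtain ⟨h1, h2, h3, h4⟩ := hmem1 x hx
    obtain ⟨g1, g2, g3, g4⟩ := hmem1 y hy
    have hx' : x ∈ f1 y := by rw [← hxy]; simp [hf1]
    simp only [hf1, Finset.mem_insert, Finset.mem_singleton] at hx'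
    omega
  have hinj2 : Set.InjOn f2 T2 := by
    intro x hx y hy hxy
    obtain ⟨h1, h2, h3, h4, h5⟩ := hmem2 x hx
    obtain ⟨g1, g2, g3, g4, g5⟩ := hmem2 y hy
    have hx' : x ∈ f2 y := by rw [← hxy]; simp [hf2]
    have hy' : y ∈ f2 x := by rw [hxy]; simp [hf2]
    simp only [hf2, Finset.mem_insert, Finset.mem_singleton] at hx' hy'
    omega
  -- disjointness of the two image families
  have hdisj : Disjoint (T1.image f1) (T2.image f2) := by
    rw [Finset.disjoint_left]
    rintro S hS1 hS2
    simp only [Finset.mem_image] at hS1 hS2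
    obtain ⟨x, hx, hxS⟩ := hS1
    obtain ⟨y, hy, hyS⟩ := hS2
    obtain ⟨h1, h2, h3, h4⟩ := hmem1 x hx
    obtain ⟨g1, g2, g3, g4, g5⟩ := hmem2 y hy
    have hx' : x ∈ f2 y := by rw [hyS, ← hxS]; simp [hf1]
    have hx'' : a + b - x ∈ f2 y := by rw [hyS, ← hxS]; simp [hf1]
    simp only [hf2, Finset.mem_insert, Finset.mem_singleton] at hx' hx''
    omega
  -- cardinality computations
  have hcard1 : T1.card + 1 ≥ (a + b - 1) / 2 + 1 - max 1 (a + b - n) := by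
    rw [hT1]
    have h := Finset.card_filter_add_card_filter_not
      (s := Finset.Icc (max 1 (a + b - n)) ((a + b - 1) / 2)) (p := fun x => x ≠ b)
    have hc : ((Finset.Icc (max 1 (a + b - n)) ((a + b - 1) / 2)).filter
        (fun x => ¬ x ≠ b)).card ≤ 1 := by
      apply le_trans (Finset.card_le_card (t := {b}) ?_) (by simp)
      intro z hz
      simp only [Finset.mem_filter, not_not] at hz
      simp [hz.2]
    rw [Nat.card_Icc] at h
    omega
  have hcard2 : T2.card + 3 ≥ n - (a - b) ∧
      (2 * b ≤ a → T2.card + 2 ≥ n - (a - b)) ∧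
      (n + b < 2 * a → T2.card + 2 ≥ n - (a - b)) := by
    rw [hT2]
    have h := Finset.card_filter_add_card_filter_not
      (s := Finset.Icc 1 (n - (a - b)))
      (p := fun x => x ≠ a ∧ x ≠ b ∧ x + (a - b) ≠ b)
    rw [Nat.card_Icc] at h
    have hsub3 : ((Finset.Icc 1 (n - (a - b))).filter
        (fun x => ¬ (x ≠ a ∧ x ≠ b ∧ x + (a - b) ≠ b))).card ≤ 3 := by
      apply le_trans (Finset.card_le_card (t := {a, b, b - (a - b)}) ?_) (card_three_le _ _ _)
      intro z hz
      simp only [Finset.mem_filter, Finset.mem_Icc, not_and_or, not_not] at hz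
      simp only [Finset.mem_insert, Finset.mem_singleton]
      omega
    refine ⟨by omega, fun hab => ?_, fun hab => ?_⟩
    · have hsub2 : ((Finset.Icc 1 (n - (a - b))).filter
          (fun x => ¬ (x ≠ a ∧ x ≠ b ∧ x + (a - b) ≠ b))).card ≤ 2 := by
        apply le_trans (Finset.card_le_card (t := {a, b}) ?_) (card_two_le _ _)
        intro z hz
        simp only [Finset.mem_filter, Finset.mem_Icc, not_and_or, not_not] at hz
        simp only [Finset.mem_insert, Finset.mem_singleton]
        omega
      omega
    · have hsub2 : ((Finset.Icc 1 (n - (a - b))).filter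
          (fun x => ¬ (x ≠ a ∧ x ≠ b ∧ x + (a - b) ≠ b))).card ≤ 2 := by
        apply le_trans (Finset.card_le_card (t := {b, b - (a - b)}) ?_) (card_two_le _ _)
        intro z hz
        simp only [Finset.mem_filter, Finset.mem_Icc, not_and_or, not_not] at hz
        simp only [Finset.mem_insert, Finset.mem_singleton]
        omega
      omega
  -- card of F
  have hFcard : F.card = T1.card + T2.card := by
    rw [hF, Finset.card_union_of_disjoint hdisj,
      Finset.card_image_of_injOn hinj1, Finset.card_image_of_injOn hinj2]
  -- the key natural-number inequality
  have hkey : n ≤ 2 * F.card + 8 := by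
    obtain ⟨hc2a, hc2b, hc2c⟩ := hcard2
    rw [hFcard]
    rcases le_or_gt (2 * b) a with h | h
    · have := hc2b h
      omega
    · rcases le_or_gt (2 * a) (n + b) with h' | h'
      · omega
      · have := hc2c h'
        omega
  -- pass to ncard and reals
  have hle : F.card ≤ Tgt.ncard := by
    rw [← Set.ncard_coe_finset F]
    exact Set.ncard_le_ncard hFsub hTfin
  have : ((n : ℝ)) ≤ 2 * (Tgt.ncard : ℝ) + 8 := by
    have h1 : (n : ℝ) ≤ 2 * (F.card : ℝ) + 8 := by exact_mod_cast hkey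
    have h2 : (F.card : ℝ) ≤ (Tgt.ncard : ℝ) := by exact_mod_cast hle
    linarith
  linarith
end

section
/- For integers n ≥ k ≥ 4, the maximum over all k-colorings c : {1,...,n} → {1,...,k} of the number of rainbow Sidon 4-sets is at most (1/12 - 1/(24k)) n³ + C_k n², where C_k is a constant depending only on k. -/
open Finset

/-!
For σ ≤ 2n+1 let E_σ be the set of pairs a < b in [1,n] with a + b = σ. A Sidon 4-set is an
unordered pair of edges of one E_σ, and it is rainbow only if the two edges carry disjoint
colour sets. Cauchy–Schwarz over the k colour classes shows that at least |E_σ|²/(2k) ordered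
pairs of edges of E_σ share a colour, so at most (1/2 - 1/(4k))|E_σ|² unordered pairs can be
rainbow. Finally |E_σ| ≤ min(σ, 2n+2-σ)/2 gives ∑_σ |E_σ|² ≤ n³/6 + O(n²).
-/

-- Cauchy–Schwarz over the classes `{e ∈ E | i ∈ col e}`: a pair sharing colours lies in the
-- squares of at most `m` of them.
theorem sq_card_le_mul_card_not_disjoint {γ β : Type*} [Fintype β] [DecidableEq β]
    (E : Finset γ) (col : γ → Finset β) (m : ℕ)
    (hne : ∀ e ∈ E, (col e).Nonempty) (hle : ∀ e ∈ E, #(col e) ≤ m) :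
    #E ^ 2 ≤ m * Fintype.card β * #{p ∈ E ×ˢ E | ¬Disjoint (col p.1) (col p.2)} := by
  set F : β → Finset γ := fun i => {e ∈ E | i ∈ col e}
  have hcover : #E ≤ ∑ i, #(F i) :=
    calc #E = ∑ e ∈ E, 1 := card_eq_sum_ones E
      _ ≤ ∑ e ∈ E, #(col e) := sum_le_sum fun e he => (hne e he).card_pos
      _ = ∑ i, #(F i) := by
        simpa [bipartiteAbove, bipartiteBelow, F] using
          sum_card_bipartiteAbove_eq_sum_card_bipartiteBelow (s := E) (t := univ)
            (r := fun e i => i ∈ col e)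
  have hsq : ∑ i, #(F i) ^ 2 ≤ m * #{p ∈ E ×ˢ E | ¬Disjoint (col p.1) (col p.2)} :=
    calc ∑ i, #(F i) ^ 2 = ∑ p ∈ E ×ˢ E, #(col p.1 ∩ col p.2) := by
          have h := sum_card_bipartiteAbove_eq_sum_card_bipartiteBelow (s := E ×ˢ E) (t := univ)
            (r := fun p i => i ∈ col p.1 ∧ i ∈ col p.2)
          simp only [bipartiteAbove, bipartiteBelow, ← mem_inter, filter_mem_eq_inter,
            univ_inter] at h
          rw [h]
          refine sum_congr rfl fun i _ => ?_
          rw [sq, ← card_product]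
          congr 1
          ext p
          simp only [F, mem_product, mem_filter, mem_inter]
          tauto
      _ = ∑ p ∈ E ×ˢ E with ¬Disjoint (col p.1) (col p.2), #(col p.1 ∩ col p.2) := by
          refine (sum_filter_of_ne fun p _ hp => ?_).symm
          exact not_disjoint_iff_nonempty_inter.2 (card_ne_zero.1 hp)
      _ ≤ ∑ p ∈ E ×ˢ E with ¬Disjoint (col p.1) (col p.2), m :=
          sum_le_sum fun p hp => (card_le_card inter_subset_left).trans
            (hle _ (mem_product.1 (mem_filter.1 hp).1).1)
      _ = _ := by rw [sum_const, smul_eq_mul, mul_comm]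
  calc #E ^ 2 ≤ (∑ i, #(F i)) ^ 2 := Nat.pow_le_pow_left hcover 2
    _ ≤ Fintype.card β * ∑ i, #(F i) ^ 2 := sq_sum_le_card_mul_sum_sq
    _ ≤ Fintype.card β * (m * _) := Nat.mul_le_mul_left _ hsq
    _ = _ := by ring

section RainbowPairs

variable {α β : Type*} [DecidableEq β] (c : α → β)

def edgeColors (e : α × α) : Finset β := {c e.1, c e.2}

def rainbowPairs [LinearOrder α] (E : Finset (α × α)) : Finset ((α × α) × (α × α)) :=
  {p ∈ E ×ˢ E | p.1.1 < p.2.1 ∧ Disjoint (edgeColors c p.1) (edgeColors c p.2)}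

theorem two_mul_card_rainbowPairs_add_card_le [LinearOrder α] (E : Finset (α × α)) :
    2 * #(rainbowPairs c E) +
        #{p ∈ E ×ˢ E | ¬Disjoint (edgeColors c p.1) (edgeColors c p.2)} ≤ #E ^ 2 := by
  set P := {p ∈ E ×ˢ E | Disjoint (edgeColors c p.1) (edgeColors c p.2)}
  have hR : rainbowPairs c E = {p ∈ P | p.1.1 < p.2.1} := by
    ext p
    simp only [rainbowPairs, P, mem_filter]
    tauto
  have hswap : #{p ∈ P | p.1.1 < p.2.1} ≤ #{p ∈ P | ¬p.1.1 < p.2.1} := by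
    refine card_le_card_of_injOn Prod.swap (fun p hp => ?_) Prod.swap_injective.injOn
    simp only [P, coe_filter, Set.mem_ofPred_eq, mem_filter, mem_product] at hp ⊢
    exact ⟨⟨hp.1.1.symm, hp.1.2.symm⟩, hp.2.not_gt⟩
  have hP := card_filter_add_card_filter_not (s := P) (fun p => p.1.1 < p.2.1)
  have hE : #P + #{p ∈ E ×ˢ E | ¬Disjoint (edgeColors c p.1) (edgeColors c p.2)} = #E ^ 2 := by
    rw [card_filter_add_card_filter_not, card_product, sq]
  rw [hR]
  omega

theorem four_mul_card_mul_card_rainbowPairs_add_sq_le [LinearOrder α] [Fintype β]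
    (E : Finset (α × α)) :
    4 * Fintype.card β * #(rainbowPairs c E) + #E ^ 2 ≤ 2 * Fintype.card β * #E ^ 2 := by
  have hclash := sq_card_le_mul_card_not_disjoint E (edgeColors c) 2
    (fun _ _ => insert_nonempty _ _) (fun _ _ => card_le_two)
  have hsplit := two_mul_card_rainbowPairs_add_card_le c E
  calc 4 * Fintype.card β * #(rainbowPairs c E) + #E ^ 2
      ≤ 4 * Fintype.card β * #(rainbowPairs c E) + 2 * Fintype.card β *
          #{p ∈ E ×ˢ E | ¬Disjoint (edgeColors c p.1) (edgeColors c p.2)} := by omega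
    _ = 2 * Fintype.card β * (2 * #(rainbowPairs c E) +
          #{p ∈ E ×ˢ E | ¬Disjoint (edgeColors c p.1) (edgeColors c p.2)}) := by ring
    _ ≤ 2 * Fintype.card β * #E ^ 2 := Nat.mul_le_mul_left _ hsplit

end RainbowPairs

def sumReps (n σ : ℕ) : Finset (ℕ × ℕ) :=
  {e ∈ Icc 1 n ×ˢ Icc 1 n | e.1 < e.2 ∧ e.1 + e.2 = σ}

theorem two_mul_card_sumReps_le (n σ : ℕ) : 2 * #(sumReps n σ) ≤ σ := by
  have h : #(sumReps n σ) ≤ #(Ico 1 ((σ + 1) / 2)) := by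
    refine card_le_card_of_injOn Prod.fst (fun e he => ?_) fun e he f hf hef => ?_
    · simp only [sumReps, coe_filter, mem_product, mem_Icc, Set.mem_ofPred_eq] at he
      simp only [coe_Ico, Set.mem_Ico]
      omega
    · simp only [sumReps, coe_filter, mem_product, mem_Icc, Set.mem_ofPred_eq] at he hf
      exact Prod.ext hef (by omega)
  rw [Nat.card_Ico] at h
  omega

theorem two_mul_card_sumReps_le_sub (n σ : ℕ) : 2 * #(sumReps n σ) ≤ 2 * n + 2 - σ := by
  have h : #(sumReps n σ) ≤ #(Ioc (σ / 2) n) := by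
    refine card_le_card_of_injOn Prod.snd (fun e he => ?_) fun e he f hf hef => ?_
    · simp only [sumReps, coe_filter, mem_product, mem_Icc, Set.mem_ofPred_eq] at he
      simp only [coe_Ioc, Set.mem_Ioc]
      omega
    · simp only [sumReps, coe_filter, mem_product, mem_Icc, Set.mem_ofPred_eq] at he hf
      exact Prod.ext (by omega) hef
  rw [Nat.card_Ioc] at h
  omega

theorem three_mul_sum_range_sq_le (m : ℕ) : 3 * ∑ j ∈ range m, j ^ 2 ≤ m ^ 3 := by
  induction m with
  | zero => simp
  | succ m ih =>
    calc 3 * ∑ j ∈ range (m + 1), j ^ 2 = 3 * ∑ j ∈ range m, j ^ 2 + 3 * m ^ 2 := by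
          rw [sum_range_succ, mul_add]
      _ ≤ m ^ 3 + 3 * m ^ 2 := Nat.add_le_add_right ih _
      _ ≤ (m + 1) ^ 3 := by ring_nf; omega

theorem twelve_mul_sum_sq_card_sumReps_le (n : ℕ) :
    12 * ∑ σ ∈ range (2 * n + 2), #(sumReps n σ) ^ 2 ≤ (n + 1) ^ 3 + (n + 2) ^ 3 := by
  have hsplit : 4 * ∑ σ ∈ range (2 * n + 2), #(sumReps n σ) ^ 2 =
      ∑ σ ∈ range (n + 1), (2 * #(sumReps n σ)) ^ 2 +
        ∑ j ∈ range (n + 1), (2 * #(sumReps n (n + 1 + j))) ^ 2 := by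
    rw [show 2 * n + 2 = (n + 1) + (n + 1) by ring, sum_range_add, mul_add, mul_sum, mul_sum]
    simp only [mul_pow]
    norm_num
  have hlow :
      ∑ σ ∈ range (n + 1), (2 * #(sumReps n σ)) ^ 2 ≤ ∑ σ ∈ range (n + 1), σ ^ 2 :=
    sum_le_sum fun σ _ => Nat.pow_le_pow_left (two_mul_card_sumReps_le n σ) 2
  have hhigh : ∑ j ∈ range (n + 1), (2 * #(sumReps n (n + 1 + j))) ^ 2 ≤
      ∑ j ∈ range (n + 2), j ^ 2 :=
    calc _ ≤ ∑ j ∈ range (n + 1), (n + 1 - j) ^ 2 :=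
          sum_le_sum fun j _ => Nat.pow_le_pow_left
            ((two_mul_card_sumReps_le_sub n _).trans (by omega)) 2
      _ = ∑ j ∈ range (n + 1), (j + 1) ^ 2 := by
          rw [← sum_range_reflect]
          refine sum_congr rfl fun j hj => ?_
          rw [mem_range] at hj
          congr 1
          omega
      _ = ∑ j ∈ range (n + 2), j ^ 2 := by simp [sum_range_succ' (fun j => j ^ 2)]
  have h1 := three_mul_sum_range_sq_le (n + 1)
  have h2 := three_mul_sum_range_sq_le (n + 2)
  omega

theorem exists_mem_sumReps {n a b : ℕ} (ha : a ∈ Icc 1 n) (hb : b ∈ Icc 1 n) (hab : a ≠ b) :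
    ∃ e ∈ sumReps n (a + b), ({e.1, e.2} : Finset ℕ) = {a, b} := by
  rcases hab.lt_or_gt with h | h
  · exact ⟨(a, b), by simp [sumReps, *], rfl⟩
  · exact ⟨(b, a), by simp [sumReps, add_comm, *], pair_comm _ _⟩

theorem IsSidonFourSet.exists_mem_rainbowPairs {β : Type*} [DecidableEq β] {c : ℕ → β}
    {n : ℕ} {S : Finset ℕ} (hS : IsSidonFourSet n S) (hc : Set.InjOn c S) :
    ∃ σ ∈ range (2 * n + 2), ∃ p ∈ rainbowPairs c (sumReps n σ),
      {p.1.1, p.1.2} ∪ {p.2.1, p.2.2} = S := by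
  obtain ⟨hIcc, x₁, x₂, x₃, x₄, rfl, h12, h13, h14, h23, h24, h34, hsum⟩ := hS
  have hmem : ∀ x ∈ ({x₁, x₂, x₃, x₄} : Finset ℕ), x ∈ Icc 1 n := fun x hx => by
    simpa using hIcc hx
  obtain ⟨e, he, he₁₂⟩ := exists_mem_sumReps (hmem x₁ (by simp)) (hmem x₂ (by simp)) h12
  obtain ⟨f, hf, hf₃₄⟩ := exists_mem_sumReps (hmem x₃ (by simp)) (hmem x₄ (by simp)) h34
  rw [← hsum] at hf
  have hcolors (g : ℕ × ℕ) : edgeColors c g = ({g.1, g.2} : Finset ℕ).image c := by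
    simp [edgeColors, image_insert]
  have hdisj : Disjoint (edgeColors c e) (edgeColors c f) := by
    rw [hcolors, hcolors, he₁₂, hf₃₄, disjoint_left]
    simp only [mem_image]
    rintro _ ⟨y, hy, rfl⟩ ⟨z, hz, hzy⟩
    have := hc (by simp at hz ⊢; tauto) (by simp at hy ⊢; tauto) hzy
    simp only [mem_insert, mem_singleton] at hy hz
    omega
  have hne : e.1 ≠ f.1 := fun h =>
    disjoint_left.1 hdisj (mem_insert_self _ _) (by simp [edgeColors, h])
  have hunion : {e.1, e.2} ∪ {f.1, f.2} = ({x₁, x₂, x₃, x₄} : Finset ℕ) := by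
    rw [he₁₂, hf₃₄, insert_union, singleton_union]
  refine ⟨x₁ + x₂, mem_range.2 (by simp at hmem; omega), ?_⟩
  rcases hne.lt_or_gt with h | h
  · exact ⟨(e, f), mem_filter.2 ⟨mem_product.2 ⟨he, hf⟩, h, hdisj⟩, hunion⟩
  · exact ⟨(f, e), mem_filter.2 ⟨mem_product.2 ⟨hf, he⟩, h, hdisj.symm⟩,
      (union_comm _ _).trans hunion⟩

theorem ncard_rainbow_sidonFourSets_le {β : Type*} [DecidableEq β] (n : ℕ) (c : ℕ → β) :
    {S : Finset ℕ | IsSidonFourSet n S ∧ Set.InjOn c ↑S}.ncard ≤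
      ∑ σ ∈ range (2 * n + 2), #(rainbowPairs c (sumReps n σ)) := by
  set T := (range (2 * n + 2)).biUnion fun σ =>
    (rainbowPairs c (sumReps n σ)).image fun p => ({p.1.1, p.1.2} ∪ {p.2.1, p.2.2} : Finset ℕ)
  have hsub : {S : Finset ℕ | IsSidonFourSet n S ∧ Set.InjOn c ↑S} ⊆ T := by
    rintro S ⟨hS, hc⟩
    obtain ⟨σ, hσ, p, hp, rfl⟩ := hS.exists_mem_rainbowPairs hc
    exact mem_biUnion.2 ⟨σ, hσ, mem_image_of_mem _ hp⟩
  calc _ ≤ (T : Set (Finset ℕ)).ncard := Set.ncard_le_ncard hsub T.finite_toSet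
    _ = #T := Set.ncard_coe_finset T
    _ ≤ _ := card_biUnion_le.trans (sum_le_sum fun σ _ => card_image_le)

theorem four_mul_card_mul_ncard_rainbow_add_le {β : Type*} [DecidableEq β] [Fintype β]
    (n : ℕ) (c : ℕ → β) :
    4 * Fintype.card β * {S : Finset ℕ | IsSidonFourSet n S ∧ Set.InjOn c ↑S}.ncard +
        ∑ σ ∈ range (2 * n + 2), #(sumReps n σ) ^ 2 ≤
      2 * Fintype.card β * ∑ σ ∈ range (2 * n + 2), #(sumReps n σ) ^ 2 :=
  calc _ ≤ 4 * Fintype.card β * ∑ σ ∈ range (2 * n + 2), #(rainbowPairs c (sumReps n σ)) +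
        ∑ σ ∈ range (2 * n + 2), #(sumReps n σ) ^ 2 := by
        gcongr
        exact ncard_rainbow_sidonFourSets_le n c
    _ ≤ _ := by
        simpa only [mul_sum, ← sum_add_distrib] using
          sum_le_sum fun σ _ => four_mul_card_mul_card_rainbowPairs_add_sq_le c (sumReps n σ)

theorem stmt_2_general (k : ℕ) :
    ∃ C : ℝ, ∀ n : ℕ, k ≤ n → ∀ c : ℕ → Fin k,
      (({S : Finset ℕ | IsSidonFourSet n S ∧ Set.InjOn c ↑S}.ncard : ℝ)) ≤
        (1 / 12 - 1 / (24 * k)) * (n : ℝ) ^ 3 + C * n ^ 2 := by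
  refine ⟨2, fun n hkn c => ?_⟩
  have hk : (1 : ℝ) ≤ k := by exact_mod_cast (c 0).pos
  have hn : (1 : ℝ) ≤ n := by exact_mod_cast (c 0).pos.trans_le hkn
  have hNA := four_mul_card_mul_ncard_rainbow_add_le n c
  have hA := twelve_mul_sum_sq_card_sumReps_le n
  rw [Fintype.card_fin] at hNA
  set N := {S : Finset ℕ | IsSidonFourSet n S ∧ Set.InjOn c ↑S}.ncard
  set A := ∑ σ ∈ range (2 * n + 2), #(sumReps n σ) ^ 2
  have hNA' : 4 * (k : ℝ) * N + A ≤ 2 * k * A := by exact_mod_cast hNA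
  have hA' : 12 * (A : ℝ) ≤ (n + 1) ^ 3 + (n + 2) ^ 3 := by exact_mod_cast hA
  have hk2 : (0 : ℝ) ≤ 2 * k - 1 := by linarith
  rw [show (1 / 12 - 1 / (24 * k) : ℝ) = (2 * k - 1) / (24 * k) by field_simp; ring,
    div_mul_eq_mul_div, div_add' _ _ _ (by positivity), le_div_iff₀ (by positivity)]
  -- (n + 1) ^ 3 + (n + 2) ^ 3 = 2 n ^ 3 + 9 n ^ 2 + 15 n + 9
  calc (N : ℝ) * (24 * k) ≤ 6 * ((2 * k - 1) * A) := by linarith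
    _ ≤ (2 * k - 1) / 2 * ((n + 1) ^ 3 + (n + 2) ^ 3) := by
        nlinarith [mul_le_mul_of_nonneg_left hA' hk2]
    _ ≤ (2 * k - 1) * n ^ 3 + 2 * n ^ 2 * (24 * k) := by
        nlinarith [mul_le_mul_of_nonneg_left
          (by nlinarith : (9 : ℝ) * n ^ 2 + 15 * n + 9 ≤ 33 * n ^ 2) hk2]

theorem stmt_2 (k : ℕ) (hk : 4 ≤ k) :
    ∃ C : ℝ, ∀ n : ℕ, k ≤ n → ∀ c : ℕ → Fin k,
      (({S : Finset ℕ | IsSidonFourSet n S ∧ Set.InjOn c ↑S}.ncard : ℝ)) ≤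
        (1 / 12 - 1 / (24 * k)) * (n : ℝ) ^ 3 + C * n ^ 2 :=
  stmt_2_general k
end

section
/- Let α₁, α₂, α₃, α₄ be positive integers whose sum α is divisible by 4. Let A_i = [-α_i, α_i] ∩ ℤ and J = [-α/4, α/4] ∩ ℤ. Then ∑_{m ∈ ℤ} r_{A₁+A₂}(m) · r_{A₃+A₄}(m) ≤ ∑_{m = -α/2}^{α/2} r_{J+J}(m)². -/
lemma count_eq (a b m : ℤ) :
    ((Finset.Icc (-a) a ×ˢ Finset.Icc (-b) b).filter (fun p => p.1 + p.2 = m)).card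
    = (min a (m + b) + 1 - max (-a) (m - b)).toNat := by
  rw [← Int.card_Icc]
  apply Finset.card_bij (fun p _ => p.1)
  · intro p hp
    simp only [Finset.mem_filter, Finset.mem_product, Finset.mem_Icc] at hp ⊢
    omega
  · intro p hp q hq h
    simp only [Finset.mem_filter, Finset.mem_product, Finset.mem_Icc] at hp hq
    have : p.2 = q.2 := by omega
    exact Prod.ext h this
  · intro x hx
    refine ⟨(x, m - x), ?_, rfl⟩
    simp only [Finset.mem_filter, Finset.mem_product, Finset.mem_Icc] at hx ⊢
    omega

theorem stmt_6 (α₁ α₂ α₃ α₄ : ℤ) (h₁ : 0 < α₁) (h₂ : 0 < α₂) (h₃ : 0 < α₃)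
    (h₄ : 0 < α₄) (hdvd : (4 : ℤ) ∣ (α₁ + α₂ + α₃ + α₄)) :
    ∑ m ∈ Finset.Icc (-(α₁ + α₂ + α₃ + α₄)) (α₁ + α₂ + α₃ + α₄),
      ((Finset.Icc (-α₁) α₁ ×ˢ Finset.Icc (-α₂) α₂).filter
          (fun p => p.1 + p.2 = m)).card *
        ((Finset.Icc (-α₃) α₃ ×ˢ Finset.Icc (-α₄) α₄).filter
          (fun p => p.1 + p.2 = m)).card ≤
    ∑ m ∈ Finset.Icc (-((α₁ + α₂ + α₃ + α₄) / 2)) ((α₁ + α₂ + α₃ + α₄) / 2),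
      ((Finset.Icc (-((α₁ + α₂ + α₃ + α₄) / 4)) ((α₁ + α₂ + α₃ + α₄) / 4) ×ˢ
          Finset.Icc (-((α₁ + α₂ + α₃ + α₄) / 4)) ((α₁ + α₂ + α₃ + α₄) / 4)).filter
        (fun p => p.1 + p.2 = m)).card ^ 2 := by
  obtain ⟨k, hk⟩ := hdvd
  have hS2 : (α₁ + α₂ + α₃ + α₄) / 2 = 2 * k := by omega
  have hS4 : (α₁ + α₂ + α₃ + α₄) / 4 = k := by omega
  rw [hS2, hS4]
  have hsub : Finset.Icc (-(2 * k)) (2 * k) ⊆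
      Finset.Icc (-(α₁ + α₂ + α₃ + α₄)) (α₁ + α₂ + α₃ + α₄) :=
    Finset.Icc_subset_Icc (by omega) (by omega)
  rw [← Finset.sum_subset hsub ?zero]
  case zero =>
    intro m hmem hnot
    simp only [Finset.mem_Icc] at hmem hnot
    rw [count_eq, count_eq]
    have h0 : (min α₁ (m + α₂) + 1 - max (-α₁) (m - α₂)).toNat = 0 ∨
        (min α₃ (m + α₄) + 1 - max (-α₃) (m - α₄)).toNat = 0 := by omega
    rcases h0 with h | h <;> simp [h]
  apply Finset.sum_le_sum
  intro m hm
  simp only [Finset.mem_Icc] at hm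
  rw [count_eq, count_eq, count_eq]
  set u := (min α₁ (m + α₂) + 1 - max (-α₁) (m - α₂)).toNat with hu
  set v := (min α₃ (m + α₄) + 1 - max (-α₃) (m - α₄)).toNat with hv
  set w := (min k (m + k) + 1 - max (-k) (m - k)).toNat with hw
  have key : u = 0 ∨ v = 0 ∨ (u : ℤ) + v ≤ 2 * w := by omega
  rcases key with h | h | h
  · simp [h]
  · simp [h]
  · have hgoal : (u : ℤ) * v ≤ (w : ℤ) ^ 2 := by nlinarith [sq_nonneg ((u : ℤ) - v), Int.ofNat_zero_le u, Int.ofNat_zero_le v]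
    exact_mod_cast hgoal
end

section
/- If α is a positive integer and J = [-α, α] ∩ ℤ, then the number of 4-tuples (x₁, x₂, x₃, x₄) ∈ J⁴ with x₁ + x₂ + x₃ + x₄ = 0 is exactly 16α³/3 + 8α² + 14α/3 + 1. -/
/-!
Grouping the quadruples by `c = x₁ + x₂` gives `E₄(J,J,J,J) = ∑_c r(c) r(-c)`, where
`r(c) = 2α + 1 - |c|` is the number of ways to write `c` as a sum of two elements of `J`.
Hence the count is `∑_{|c| ≤ 2α} (2α + 1 - |c|)²`, a sum of squares with a closed form.
-/

open Finset
open scoped Pointwise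

section AddCommGroup

variable {G : Type*} [AddCommGroup G] [DecidableEq G]

def addReprCount (A B : Finset G) (c : G) : ℕ := #{p ∈ A ×ˢ B | p.1 + p.2 = c}

theorem card_filter_add_four_eq_zero (A B C D : Finset G) {s : Finset G} (hs : A + B ⊆ s) :
    #{p ∈ A ×ˢ B ×ˢ C ×ˢ D | p.1 + p.2.1 + p.2.2.1 + p.2.2.2 = 0} =
      ∑ c ∈ s, addReprCount A B c * addReprCount C D (-c) := by
  rw [card_eq_sum_card_fiberwise (f := fun p => p.1 + p.2.1) (t := s)]
  · refine sum_congr rfl fun c _ => ?_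
    rw [addReprCount, addReprCount, ← card_product, filter_filter]
    refine card_nbij' (fun p => ((p.1, p.2.1), (p.2.2.1, p.2.2.2)))
      (fun q => (q.1.1, q.1.2, q.2.1, q.2.2)) ?_ ?_ (fun _ _ => rfl) (fun _ _ => rfl)
    · rintro ⟨a, b, x, y⟩ hp
      simp only [mem_coe, mem_filter, mem_product] at hp ⊢
      obtain ⟨⟨ha, hb, hx, hy⟩, hsum, rfl⟩ := hp
      exact ⟨⟨⟨ha, hb⟩, rfl⟩, ⟨hx, hy⟩, by rw [eq_neg_iff_add_eq_zero, ← hsum]; abel⟩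
    · rintro ⟨⟨a, b⟩, x, y⟩ hq
      simp only [mem_coe, mem_filter, mem_product] at hq ⊢
      obtain ⟨⟨⟨ha, hb⟩, rfl⟩, ⟨hx, hy⟩, hxy⟩ := hq
      refine ⟨⟨ha, hb, hx, hy⟩, ?_, rfl⟩
      rw [add_assoc (a + b), hxy, add_neg_cancel]
  · intro p hp
    simp only [mem_coe, mem_filter, mem_product] at hp
    exact hs (add_mem_add hp.1.1 hp.1.2.1)

end AddCommGroup

theorem addReprCount_Icc_neg (n c : ℤ) :
    addReprCount (Icc (-n) n) (Icc (-n) n) c = (2 * n + 1 - |c|).toNat := by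
  have hfst : addReprCount (Icc (-n) n) (Icc (-n) n) c =
      #(Icc (max (-n) (c - n)) (min n (c + n))) := by
    refine card_nbij' Prod.fst (fun a => (a, c - a)) ?_ ?_ ?_ (fun _ _ => rfl)
    · intro p hp
      simp only [mem_coe, mem_filter, mem_product, mem_Icc] at hp ⊢
      omega
    · intro a ha
      simp only [mem_coe, mem_filter, mem_product, mem_Icc] at ha ⊢
      omega
    · rintro ⟨a, b⟩ hp
      simp only [mem_coe, mem_filter, mem_product, mem_Icc] at hp
      simp only [Prod.mk.injEq, true_and]
      omega
  rw [hfst, Int.card_Icc]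
  congr 1
  rcases abs_cases c with ⟨h, _⟩ | ⟨h, _⟩ <;> omega

-- With `t` free the summand does not depend on `m`, so induction on `m` goes through.
theorem three_mul_sum_Icc_neg_sq_sub_abs (t m : ℤ) (hm : 0 ≤ m) :
    3 * ∑ c ∈ Icc (-m) m, (t - |c|) ^ 2 =
      (2 * m + 1) * (3 * t ^ 2 + m * (m + 1)) - 6 * t * m * (m + 1) := by
  induction m, hm using Int.leInduction with
  | base => simp
  | succ m hm ih =>
    have hIcc : Icc (-(m + 1)) (m + 1) = insert (-(m + 1)) (insert (m + 1) (Icc (-m) m)) := by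
      ext x
      simp only [mem_Icc, mem_insert]
      omega
    rw [hIcc, sum_insert (by simp; omega), sum_insert (by simp), abs_neg,
      abs_of_nonneg (by omega : (0 : ℤ) ≤ m + 1), mul_add, mul_add, ih]
    ring

theorem three_mul_card_filter_add_four_Icc_neg (n : ℤ) (hn : 0 ≤ n) :
    3 * (#{p ∈ Icc (-n) n ×ˢ Icc (-n) n ×ˢ Icc (-n) n ×ˢ Icc (-n) n |
        p.1 + p.2.1 + p.2.2.1 + p.2.2.2 = 0} : ℤ) = 16 * n ^ 3 + 24 * n ^ 2 + 14 * n + 3 := by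
  set J := Icc (-n) n
  have hsub : J + J ⊆ Icc (-(2 * n)) (2 * n) := by
    convert Icc_add_Icc_subset (-n) n (-n) n using 2 <;> ring
  have hrepr : ∀ c ∈ Icc (-(2 * n)) (2 * n), (addReprCount J J c : ℤ) = 2 * n + 1 - |c| := by
    intro c hc
    rw [addReprCount_Icc_neg, Int.toNat_of_nonneg]
    rw [mem_Icc] at hc
    rcases abs_cases c with ⟨h, _⟩ | ⟨h, _⟩ <;> omega
  have hsq : ∀ c ∈ Icc (-(2 * n)) (2 * n),
      ((addReprCount J J c * addReprCount J J (-c) : ℕ) : ℤ) = (2 * n + 1 - |c|) ^ 2 := by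
    intro c hc
    rw [Nat.cast_mul, hrepr c hc, hrepr (-c) (by rw [mem_Icc] at hc ⊢; omega), abs_neg, sq]
  rw [card_filter_add_four_eq_zero J J J J hsub, Nat.cast_sum, sum_congr rfl hsq,
    three_mul_sum_Icc_neg_sq_sub_abs _ _ (by omega)]
  ring

theorem stmt_8 (α : ℤ) (hα : 0 < α) :
    ((((Finset.Icc (-α) α ×ˢ Finset.Icc (-α) α ×ˢ Finset.Icc (-α) α ×ˢ
          Finset.Icc (-α) α).filter
        (fun p => p.1 + p.2.1 + p.2.2.1 + p.2.2.2 = 0)).card : ℚ) =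
      16 * (α : ℚ) ^ 3 / 3 + 8 * α ^ 2 + 14 * α / 3 + 1) := by
  have h : 3 * (#{p ∈ Icc (-α) α ×ˢ Icc (-α) α ×ˢ Icc (-α) α ×ˢ Icc (-α) α |
      p.1 + p.2.1 + p.2.2.1 + p.2.2.2 = 0} : ℚ) = 16 * α ^ 3 + 24 * α ^ 2 + 14 * α + 3 := by
    exact_mod_cast three_mul_card_filter_add_four_Icc_neg α hα.le
  linarith
end

section
/- Let k ≥ 4 be an even integer. The number of unordered solutions {α + β ≡ γ + δ} to the Sidon equation in ℤ_k with α, β, γ, δ distinct is exactly k³/8 - k²/2 + k/2. -/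
/-!
Each Sidon 4-set `a + b = c + d` is the image of exactly 8 ordered quadruples (swap within
either side, swap the two sides). An ordered quadruple is determined by `a` and the offsets
`x = c - a`, `y = d - a`, which range over the pairs with `x, y ≠ 0`, `y ≠ x`, `y ≠ -x`: for
`x ≠ 0` that leaves `n - 3` values of `y`, or `n - 2` when `x = -x`. So in a finite abelian group
of order `n` with `t` elements of order two, `8 · #S = n ((n - 1)(n - 3) + t)`, and in `ℤ_k`
with `k` even `t = 1`, whence `8 · #S = k (k - 2)²`.
-/

open Finset

section SidonCount

variable {G : Type*} [AddCommGroup G]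

def IsSidonQuadruple (a b c d : G) : Prop :=
  a ≠ b ∧ a ≠ c ∧ a ≠ d ∧ b ≠ c ∧ b ≠ d ∧ c ≠ d ∧ a + b = c + d

variable (G) in
def sidonFourSets : Set (Sym2 (Sym2 G)) :=
  {q | ∃ a b c d : G, q = s(s(a, b), s(c, d)) ∧ IsSidonQuadruple a b c d}

def pairOfPairs {α : Type*} (x : α × α × α × α) : Sym2 (Sym2 α) :=
  s(s(x.1, x.2.1), s(x.2.2.1, x.2.2.2))

variable [DecidableEq G]

lemma card_insert_zero_neg {x : G} (hx : x ≠ 0) :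
    (#{0, x, -x} : ℤ) = 3 - if -x = x then 1 else 0 := by
  split_ifs with hneg
  · rw [hneg, insert_eq_of_mem (mem_singleton_self x), card_pair hx.symm]
    norm_num
  · rw [card_insert_of_notMem, card_pair (Ne.symm hneg)]
    · norm_num
    · simp [hx.symm, hx]

variable [Fintype G]

instance (a b c d : G) : Decidable (IsSidonQuadruple a b c d) := by
  unfold IsSidonQuadruple; infer_instance

variable (G) in
def sidonQuadruples : Finset (G × G × G × G) :=
  {x | IsSidonQuadruple x.1 x.2.1 x.2.2.1 x.2.2.2}

variable (G) in
def sidonOffsets : Finset (G × G) :=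
  {p | p.1 ≠ 0 ∧ p.2 ≠ 0 ∧ p.1 ≠ p.2 ∧ p.1 + p.2 ≠ 0}

@[simp]
lemma mem_sidonQuadruples {a b c d : G} :
    (a, b, c, d) ∈ sidonQuadruples G ↔ IsSidonQuadruple a b c d := by
  simp [sidonQuadruples]

@[simp]
lemma mem_sidonOffsets {x y : G} :
    (x, y) ∈ sidonOffsets G ↔ x ≠ 0 ∧ y ≠ 0 ∧ x ≠ y ∧ x + y ≠ 0 := by
  simp [sidonOffsets]

lemma card_sidonQuadruples :
    #(sidonQuadruples G) = Fintype.card G * #(sidonOffsets G) := by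
  rw [← card_univ, ← card_product]
  refine card_bij' (fun x _ => (x.1, x.2.2.1 - x.1, x.2.2.2 - x.1))
    (fun y _ => (y.1, y.1 + y.2.1 + y.2.2, y.1 + y.2.1, y.1 + y.2.2)) ?_ ?_ ?_ ?_
  · rintro ⟨a, b, c, d⟩ h
    obtain ⟨hab, hac, had, -, -, hcd, hsum⟩ := mem_sidonQuadruples.1 h
    refine mem_product.2 ⟨mem_univ _, mem_sidonOffsets.2
      ⟨sub_ne_zero.2 hac.symm, sub_ne_zero.2 had.symm, fun h => hcd ?_, fun h => hab ?_⟩⟩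
    · linear_combination (norm := module) h
    · linear_combination (norm := module) -h - hsum
  · rintro ⟨a, x, y⟩ h
    obtain ⟨hx, hy, hxy, hxy'⟩ := mem_sidonOffsets.1 (mem_product.1 h).2
    refine mem_sidonQuadruples.2 ⟨fun h => hxy' ?_, fun h => hx ?_, fun h => hy ?_,
      fun h => hy ?_, fun h => hx ?_, fun h => hxy ?_, by abel⟩
    all_goals first
      | linear_combination (norm := module) h
      | linear_combination (norm := module) -h
  · rintro ⟨a, b, c, d⟩ h
    have hsum := (mem_sidonQuadruples.1 h).2.2.2.2.2.2
    simp only [Prod.mk.injEq, add_sub_cancel, true_and, and_true]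
    linear_combination (norm := module) -hsum
  · rintro ⟨a, x, y⟩ -
    simp

lemma card_filter_sidonOffsets_fst (x : G) :
    (#{p ∈ sidonOffsets G | p.1 = x} : ℤ) =
      (if x = 0 then 0 else (Fintype.card G : ℤ) - 3) + if x ≠ 0 ∧ -x = x then 1 else 0 := by
  by_cases hx : x = 0
  · subst hx
    simp only [if_true, ne_eq, not_true_eq_false, false_and, if_false, add_zero,
      Nat.cast_eq_zero, card_eq_zero, filter_eq_empty_iff]
    rintro ⟨_, _⟩ h rfl
    exact (mem_filter.1 h).2.1 rfl
  have hfiber : {p ∈ sidonOffsets G | p.1 = x} =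
      ({0, x, -x}ᶜ : Finset G).map ⟨(x, ·), Prod.mk_right_injective x⟩ := by
    ext ⟨x', y⟩
    simp only [sidonOffsets, mem_filter, mem_univ, true_and, mem_map, mem_compl, mem_insert,
      mem_singleton, not_or, Function.Embedding.coeFn_mk, Prod.mk.injEq]
    constructor
    · rintro ⟨⟨-, hy, hxy, hsum⟩, rfl⟩
      exact ⟨y, ⟨hy, Ne.symm hxy, fun h => hsum (by rw [h, add_neg_cancel])⟩, rfl, rfl⟩
    · rintro ⟨y, ⟨hy, hxy, hsum⟩, rfl, rfl⟩
      exact ⟨⟨hx, hy, Ne.symm hxy, fun h => hsum (eq_neg_of_add_eq_zero_right h)⟩, rfl⟩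
  rw [hfiber, card_map, card_compl, Nat.cast_sub (card_le_univ _), card_insert_zero_neg hx]
  simp only [hx, if_false, ne_eq, not_false_eq_true, true_and]
  ring

lemma card_sidonOffsets :
    (#(sidonOffsets G) : ℤ) =
      (Fintype.card G - 1) * (Fintype.card G - 3) + #{x : G | x ≠ 0 ∧ -x = x} := by
  rw [card_eq_sum_card_fiberwise (f := Prod.fst) (t := univ) (fun _ _ => mem_coe.2 (mem_univ _)),
    Nat.cast_sum]
  simp only [card_filter_sidonOffsets_fst, sum_add_distrib, sum_ite, sum_const_zero, zero_add,
    sum_const]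
  simp only [← ne_eq, filter_ne', card_erase_of_mem (mem_univ _), card_univ,
    Nat.cast_sub Fintype.card_pos, nsmul_eq_mul, mul_one, add_zero]
  ring

lemma filter_pairOfPairs_eq {a b c d : G} (h : IsSidonQuadruple a b c d) :
    {y ∈ sidonQuadruples G | pairOfPairs y = pairOfPairs (a, b, c, d)} =
      {(a, b, c, d), (b, a, c, d), (a, b, d, c), (b, a, d, c),
       (c, d, a, b), (d, c, a, b), (c, d, b, a), (d, c, b, a)} := by
  obtain ⟨hab, hac, had, hbc, hbd, hcd, hsum⟩ := h
  ext ⟨x, y, z, w⟩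
  simp only [mem_filter, mem_sidonQuadruples, IsSidonQuadruple, pairOfPairs, Sym2.eq_iff,
    mem_insert, mem_singleton, Prod.mk.injEq]
  constructor
  · rintro ⟨-, (⟨⟨rfl, rfl⟩ | ⟨rfl, rfl⟩, ⟨rfl, rfl⟩ | ⟨rfl, rfl⟩⟩ |
      ⟨⟨rfl, rfl⟩ | ⟨rfl, rfl⟩, ⟨rfl, rfl⟩ | ⟨rfl, rfl⟩⟩)⟩ <;> simp
  · rintro (⟨rfl, rfl, rfl, rfl⟩ | ⟨rfl, rfl, rfl, rfl⟩ | ⟨rfl, rfl, rfl, rfl⟩ |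
      ⟨rfl, rfl, rfl, rfl⟩ | ⟨rfl, rfl, rfl, rfl⟩ | ⟨rfl, rfl, rfl, rfl⟩ | ⟨rfl, rfl, rfl, rfl⟩ |
      ⟨rfl, rfl, rfl, rfl⟩) <;>
    refine ⟨⟨?_, ?_, ?_, ?_, ?_, ?_, ?_⟩, by simp⟩ <;>
    first
      | assumption
      | exact Ne.symm ‹_›
      | linear_combination (norm := module) hsum
      | linear_combination (norm := module) -hsum

lemma card_filter_pairOfPairs_eq {a b c d : G} (h : IsSidonQuadruple a b c d) :
    #{y ∈ sidonQuadruples G | pairOfPairs y = pairOfPairs (a, b, c, d)} = 8 := by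
  rw [filter_pairOfPairs_eq h]
  obtain ⟨hab, hac, had, hbc, hbd, hcd, -⟩ := h
  simp [card_insert_of_notMem, hab, hac, had, hbc, hbd, hcd, hab.symm, hac.symm, had.symm,
    hbc.symm, hbd.symm, hcd.symm]

lemma sidonFourSets_eq_image :
    sidonFourSets G = ((sidonQuadruples G).image pairOfPairs : Set (Sym2 (Sym2 G))) := by
  ext q
  simp only [sidonFourSets, coe_image, Set.mem_image, mem_coe, Prod.exists, mem_sidonQuadruples,
    pairOfPairs]
  constructor
  · rintro ⟨a, b, c, d, rfl, h⟩
    exact ⟨a, b, c, d, h, rfl⟩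
  · rintro ⟨a, b, c, d, h, rfl⟩
    exact ⟨a, b, c, d, rfl, h⟩

lemma card_sidonQuadruples_eq_eight_mul :
    #(sidonQuadruples G) = 8 * (sidonFourSets G).ncard := by
  rw [sidonFourSets_eq_image, Set.ncard_coe_finset, card_eq_sum_card_image pairOfPairs,
    sum_const_nat, mul_comm]
  rintro _ hq
  obtain ⟨⟨a, b, c, d⟩, hx, rfl⟩ := mem_image.1 hq
  exact card_filter_pairOfPairs_eq (mem_sidonQuadruples.1 hx)

theorem eight_mul_ncard_sidonFourSets :
    (8 * (sidonFourSets G).ncard : ℤ) = Fintype.card G *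
      ((Fintype.card G - 1) * (Fintype.card G - 3) + #{x : G | x ≠ 0 ∧ -x = x}) := by
  rw [← card_sidonOffsets]
  exact_mod_cast (card_sidonQuadruples_eq_eight_mul.symm.trans card_sidonQuadruples)

end SidonCount

lemma ZMod.card_filter_ne_zero_neg_eq_self {k : ℕ} [NeZero k] (hk : Even k) :
    #{x : ZMod k | x ≠ 0 ∧ -x = x} = 1 := by
  obtain ⟨m, rfl⟩ := hk
  have hm : m < m + m := by have := NeZero.ne (m + m); omega
  refine card_eq_one.2 ⟨m, ?_⟩
  ext x
  simp only [mem_filter, mem_univ, true_and, mem_singleton, ZMod.neg_eq_self_iff]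
  constructor
  · rintro ⟨hx, hx0 | hval⟩
    · exact absurd hx0 hx
    · rw [← ZMod.natCast_zmod_val x]
      congr 1
      omega
  · rintro rfl
    have hval := ZMod.val_natCast_of_lt hm
    refine ⟨fun h => ?_, Or.inr (by omega)⟩
    rw [h, ZMod.val_zero] at hval
    omega

theorem stmt_12 (k : ℕ) (hk : 4 ≤ k) (hke : Even k) :
    (({q : Sym2 (Sym2 (ZMod k)) | ∃ a b c d : ZMod k,
        q = s(s(a, b), s(c, d)) ∧
        a ≠ b ∧ a ≠ c ∧ a ≠ d ∧ b ≠ c ∧ b ≠ d ∧ c ≠ d ∧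
        a + b = c + d}.ncard : ℚ)) =
      (k : ℚ) ^ 3 / 8 - (k : ℚ) ^ 2 / 2 + (k : ℚ) / 2 := by
  have : NeZero k := ⟨by omega⟩
  have hcount := eight_mul_ncard_sidonFourSets (G := ZMod k)
  rw [ZMod.card, ZMod.card_filter_ne_zero_neg_eq_self hke] at hcount
  change ((sidonFourSets (ZMod k)).ncard : ℚ) = _
  have hcountℚ : (8 * (sidonFourSets (ZMod k)).ncard : ℚ) = k * ((k - 1) * (k - 3) + 1) := by
    exact_mod_cast hcount
  linear_combination hcountℚ / 8
end

section
/- For every integer n ≥ 4, the total number of Sidon 4-sets in {1, ..., n} is exactly n³/12 - 3n²/8 + 5n/12 if n is even, and n³/12 - 3n²/8 + 5n/12 - 1/8 if n is odd. -/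
open Finset

def sidonOfGaps (d s t : ℕ) : Finset ℕ := {d, d + s, d + t, d + s + t}

def gapPairs (n : ℕ) : Finset (ℕ × ℕ) :=
  (Icc 1 n ×ˢ Icc 1 n).filter fun p => p.1 < p.2 ∧ p.1 + p.2 ≤ n

def gapTriples (n : ℕ) : Finset (ℕ × ℕ × ℕ) :=
  (Icc 1 n ×ˢ gapPairs n).filter fun p => p.1 + p.2.1 + p.2.2 ≤ n

lemma mk_mem_gapPairs {n s t : ℕ} :
    (s, t) ∈ gapPairs n ↔ 1 ≤ s ∧ s < t ∧ s + t ≤ n := by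
  simp only [gapPairs, mem_filter, mem_product, mem_Icc]
  omega

lemma mk_mem_gapTriples {n d s t : ℕ} :
    (d, s, t) ∈ gapTriples n ↔ 1 ≤ d ∧ 1 ≤ s ∧ s < t ∧ d + s + t ≤ n := by
  simp only [gapTriples, mem_filter, mem_product, mem_Icc, mk_mem_gapPairs]
  omega

lemma exists_sidonOfGaps_eq {x₁ x₂ x₃ x₄ : ℕ} (h12 : x₁ ≠ x₂) (h13 : x₁ ≠ x₃) (h14 : x₁ ≠ x₄)
    (h34 : x₃ ≠ x₄) (hsum : x₁ + x₂ = x₃ + x₄) :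
    ∃ d s t, 0 < s ∧ s < t ∧ sidonOfGaps d s t = {x₁, x₂, x₃, x₄} := by
  -- the least element is the smaller of the two pair minima; the middle two are the larger pair
  -- minimum and the smaller pair maximum
  refine ⟨min (min x₁ x₂) (min x₃ x₄), max (min x₁ x₂) (min x₃ x₄) - min (min x₁ x₂) (min x₃ x₄),
    min (max x₁ x₂) (max x₃ x₄) - min (min x₁ x₂) (min x₃ x₄), by omega, by omega, ?_⟩
  ext y
  simp only [sidonOfGaps, mem_insert, mem_singleton]
  omega

lemma eq_of_sidonOfGaps_eq {d s t d' s' t' : ℕ} (hs : 0 < s) (hst : s < t) (hs' : 0 < s')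
    (hst' : s' < t') (h : sidonOfGaps d s t = sidonOfGaps d' s' t') :
    d = d' ∧ s = s' ∧ t = t' := by
  have hmem (y : ℕ) : y ∈ sidonOfGaps d s t ↔ y ∈ sidonOfGaps d' s' t' := by rw [h]
  simp only [sidonOfGaps, mem_insert, mem_singleton] at hmem
  have := hmem d; have := hmem (d + s); have := hmem (d + t); have := hmem (d + s + t)
  have := hmem d'; have := hmem (d' + s'); have := hmem (d' + t'); have := hmem (d' + s' + t')
  omega

lemma isSidonFourSet_iff {n : ℕ} {S : Finset ℕ} :
    IsSidonFourSet n S ↔ ∃ p ∈ gapTriples n, sidonOfGaps p.1 p.2.1 p.2.2 = S := by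
  constructor
  · rintro ⟨hS, x₁, x₂, x₃, x₄, rfl, h12, h13, h14, -, -, h34, hsum⟩
    obtain ⟨d, s, t, hs, hst, hgap⟩ := exists_sidonOfGaps_eq h12 h13 h14 h34 hsum
    refine ⟨(d, s, t), ?_, hgap⟩
    rw [← hgap] at hS
    simp only [sidonOfGaps, coe_insert, coe_singleton, Set.insert_subset_iff,
      Set.singleton_subset_iff, Set.mem_Icc] at hS
    rw [mk_mem_gapTriples]
    omega
  · rintro ⟨⟨d, s, t⟩, hp, rfl⟩
    rw [mk_mem_gapTriples] at hp
    refine ⟨?_, d, d + s + t, d + s, d + t, ?_, by omega⟩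
    · simp only [sidonOfGaps, coe_insert, coe_singleton, Set.insert_subset_iff,
        Set.singleton_subset_iff, Set.mem_Icc]
      omega
    · ext y
      simp only [sidonOfGaps, mem_insert, mem_singleton]
      omega

lemma ncard_setOf_isSidonFourSet (n : ℕ) :
    {S : Finset ℕ | IsSidonFourSet n S}.ncard = #(gapTriples n) := by
  have himage : {S : Finset ℕ | IsSidonFourSet n S} =
      (fun p : ℕ × ℕ × ℕ => sidonOfGaps p.1 p.2.1 p.2.2) '' gapTriples n := by
    ext S
    simp [isSidonFourSet_iff]
  rw [himage, Set.InjOn.ncard_image, Set.ncard_coe_finset]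
  rintro ⟨d, s, t⟩ hp ⟨d', s', t'⟩ hp' h
  simp only [mem_coe, mk_mem_gapTriples] at hp hp'
  obtain ⟨rfl, rfl, rfl⟩ := eq_of_sidonOfGaps_eq (by omega) hp.2.2.1 (by omega) hp'.2.2.1 h
  rfl

lemma card_gapPairs_succ (n : ℕ) : #(gapPairs (n + 1)) = #(gapPairs n) + n / 2 := by
  rw [← card_filter_add_card_filter_not (s := gapPairs (n + 1)) fun p => p.1 + p.2 ≤ n]
  congr 1
  · congr 1
    ext ⟨s, t⟩
    simp only [mem_filter, mk_mem_gapPairs]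
    omega
  · rw [show n / 2 = #(Icc 1 (n / 2)) by simp]
    apply card_nbij' Prod.fst (fun s => (s, n + 1 - s))
    · rintro ⟨s, t⟩
      simp only [coe_filter, Set.mem_ofPred_eq, mk_mem_gapPairs, coe_Icc, Set.mem_Icc]
      omega
    · intro s
      simp only [coe_filter, Set.mem_ofPred_eq, mk_mem_gapPairs, coe_Icc, Set.mem_Icc]
      omega
    · rintro ⟨s, t⟩
      simp only [coe_filter, Set.mem_ofPred_eq, mk_mem_gapPairs, Prod.mk.injEq, true_and]
      omega
    · intro s _
      rfl

lemma card_gapTriples_succ (n : ℕ) : #(gapTriples (n + 1)) = #(gapTriples n) + #(gapPairs n) := by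
  rw [← card_filter_add_card_filter_not (s := gapTriples (n + 1)) fun p => p.1 + p.2.1 + p.2.2 ≤ n]
  congr 1
  · congr 1
    ext ⟨d, s, t⟩
    simp only [mem_filter, mk_mem_gapTriples]
    omega
  · apply card_nbij' Prod.snd (fun q => (n + 1 - q.1 - q.2, q))
    · rintro ⟨d, s, t⟩
      simp only [coe_filter, Set.mem_ofPred_eq, mk_mem_gapPairs, mk_mem_gapTriples, mem_coe]
      omega
    · rintro ⟨s, t⟩
      simp only [coe_filter, Set.mem_ofPred_eq, mk_mem_gapPairs, mk_mem_gapTriples, mem_coe]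
      omega
    · rintro ⟨d, s, t⟩
      simp only [coe_filter, Set.mem_ofPred_eq, mk_mem_gapTriples, Prod.mk.injEq, and_true]
      omega
    · intro q _
      rfl

lemma card_gapPairs_add_card_gapPairs_succ (n : ℕ) :
    2 * (#(gapPairs n) + #(gapPairs (n + 1))) + n = n ^ 2 := by
  induction n with
  | zero => rfl
  | succ n ih =>
    have := card_gapPairs_succ n
    have := card_gapPairs_succ (n + 1)
    have : (n + 1) ^ 2 = n ^ 2 + 2 * n + 1 := by ring
    omega

lemma card_gapTriples (n : ℕ) :
    24 * #(gapTriples n) + 9 * n ^ 2 + 3 * (n % 2) = 2 * n ^ 3 + 10 * n := by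
  induction n using Nat.twoStepInduction with
  | zero => rfl
  | one => rfl
  | more n ih _ =>
    have := card_gapTriples_succ n
    have : #(gapTriples (n + 2)) = _ := card_gapTriples_succ (n + 1)
    have := card_gapPairs_add_card_gapPairs_succ n
    have : (n + 2) ^ 2 = n ^ 2 + 4 * n + 4 := by ring
    have : (n + 2) ^ 3 = n ^ 3 + 6 * n ^ 2 + 12 * n + 8 := by ring
    omega

theorem stmt_16_general (n : ℕ) :
    (Even n →
      (({S : Finset ℕ | IsSidonFourSet n S}.ncard : ℚ)) =
        (n : ℚ) ^ 3 / 12 - 3 * (n : ℚ) ^ 2 / 8 + 5 * (n : ℚ) / 12) ∧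
    (Odd n →
      (({S : Finset ℕ | IsSidonFourSet n S}.ncard : ℚ)) =
        (n : ℚ) ^ 3 / 12 - 3 * (n : ℚ) ^ 2 / 8 + 5 * (n : ℚ) / 12 - 1 / 8) := by
  have hcount :
      (24 * #(gapTriples n) + 9 * n ^ 2 + 3 * (n % 2 : ℕ) : ℚ) = 2 * n ^ 3 + 10 * n := by
    exact_mod_cast card_gapTriples n
  rw [ncard_setOf_isSidonFourSet]
  constructor
  · intro hn
    simp only [Nat.even_iff.mp hn, Nat.cast_zero] at hcount
    linarith
  · intro hn
    simp only [Nat.odd_iff.mp hn, Nat.cast_one] at hcount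
    linarith

theorem stmt_16 (n : ℕ) (hn : 4 ≤ n) :
    (Even n →
      (({S : Finset ℕ | IsSidonFourSet n S}.ncard : ℚ)) =
        (n : ℚ) ^ 3 / 12 - 3 * (n : ℚ) ^ 2 / 8 + 5 * (n : ℚ) / 12) ∧
    (Odd n →
      (({S : Finset ℕ | IsSidonFourSet n S}.ncard : ℚ)) =
        (n : ℚ) ^ 3 / 12 - 3 * (n : ℚ) ^ 2 / 8 + 5 * (n : ℚ) / 12 - 1 / 8) :=
  stmt_16_general n
end

section
/- For integers n ≥ k ≥ 4 with k dividing n, the coloring c : [n] → [k] given by c(i) ≡ i (mod k) admits at least 2·|S(k)|·(n³/(3k³) - C_k n²) rainbow Sidon 4-sets, where S(k) is the set of Sidon 4-sets in ℤ_k and C_k depends only on k. -/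
open Finset

lemma pairing_unique (x1 x2 x3 x4 y1 y2 y3 y4 : ℕ)
    (hy12 : y1 ≠ y2) (hy13 : y1 ≠ y3) (hy14 : y1 ≠ y4)
    (hy23 : y2 ≠ y3) (hy24 : y2 ≠ y4) (hy34 : y3 ≠ y4)
    (hx : x1 + x2 = x3 + x4) (hy : y1 + y2 = y3 + y4)
    (m1 : y1 = x1 ∨ y1 = x2 ∨ y1 = x3 ∨ y1 = x4)
    (m2 : y2 = x1 ∨ y2 = x2 ∨ y2 = x3 ∨ y2 = x4)
    (m3 : y3 = x1 ∨ y3 = x2 ∨ y3 = x3 ∨ y3 = x4)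
    (m4 : y4 = x1 ∨ y4 = x2 ∨ y4 = x3 ∨ y4 = x4) :
    s(s(x1, x2), s(x3, x4)) = s(s(y1, y2), s(y3, y4)) := by
  rcases m1 with h1|h1|h1|h1 <;> rcases m2 with h2|h2|h2|h2 <;>
    rcases m3 with h3|h3|h3|h3 <;> rcases m4 with h4|h4|h4|h4 <;>
    subst_vars <;>
    first
    | (exfalso; omega)
    | (simp only [Sym2.eq_iff] <;> tauto)

lemma or4_perm {p q r s : Prop} (h : p ∨ q ∨ r ∨ s) : r ∨ s ∨ p ∨ q := by tauto

lemma sumAbsG (m : ℕ) :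
    3 * (∑ i ∈ range m, ∑ j ∈ range m, ((i - j) + (j - i))) + m = m * m * m := by
  induction m with
  | zero => simp
  | succ M ih =>
    have hsym : ∑ j ∈ range M, ((M - j) + (j - M)) = ∑ i ∈ range M, ((i - M) + (M - i)) := by
      apply Finset.sum_congr rfl; intro i hi; omega
    have hrefl : ∑ i ∈ range M, ((i - M) + (M - i)) = ∑ i ∈ range M, (i + 1) := by
      rw [← Finset.sum_range_reflect]
      apply Finset.sum_congr rfl; intro i hi
      simp only [Finset.mem_range] at hi
      omega
    have hgauss : (∑ i ∈ range M, i) * 2 = M * (M - 1) := Finset.sum_range_id_mul_two M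
    have hexp : ∑ i ∈ range (M+1), ∑ j ∈ range (M+1), ((i - j) + (j - i))
        = (∑ i ∈ range M, ∑ j ∈ range M, ((i - j) + (j - i))) + 2 * (∑ i ∈ range M, i) + 2 * M := by
      rw [Finset.sum_range_succ]
      have : ∀ i ∈ range M, ∑ j ∈ range (M+1), ((i - j) + (j - i))
          = (∑ j ∈ range M, ((i - j) + (j - i))) + ((i - M) + (M - i)) := by
        intro i hi; rw [Finset.sum_range_succ]
      rw [Finset.sum_congr rfl this, Finset.sum_add_distrib, Finset.sum_range_succ, hsym, hrefl,
        Finset.sum_add_distrib, Finset.sum_const, Finset.card_range]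
      simp; omega
    rw [hexp]
    rcases Nat.eq_zero_or_pos M with hM | hM
    · subst hM; simp
    · obtain ⟨N, rfl⟩ : ∃ N, M = N + 1 := ⟨M - 1, by omega⟩
      simp only [Nat.add_sub_cancel] at hgauss
      zify at ih hgauss ⊢
      linear_combination ih + 3 * hgauss

/-- The parameter set of triples used in the construction. -/
def Rsig (m : ℕ) : Finset (Σ _ : ℕ × ℕ, ℕ) :=
  (range m ×ˢ range m).sigma
    (fun p => (range m).filter (fun l => l + 1 ≤ p.1 + p.2 ∧ p.1 + p.2 + 2 ≤ l + m))

lemma Rsig_card (m : ℕ) : 2 * (m * m * m) ≤ 3 * (Rsig m).card + 6 * (m * m) := by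
  have hcard : (Rsig m).card
      = ∑ i ∈ range m, ∑ j ∈ range m,
          ((range m).filter (fun l => l + 1 ≤ i + j ∧ i + j + 2 ≤ l + m)).card := by
    rw [Rsig, Finset.card_sigma, Finset.sum_product]
  have hinner : ∀ i j : ℕ,
      ((range m).filter (fun l => l + 1 ≤ i + j ∧ i + j + 2 ≤ l + m)).card
      = min (i + j) m - (i + j + 2 - m) := by
    intro i j
    have : (range m).filter (fun l => l + 1 ≤ i + j ∧ i + j + 2 ≤ l + m)
        = Finset.Ico (i + j + 2 - m) (min (i + j) m) := by
      ext l; simp only [Finset.mem_filter, Finset.mem_range, Finset.mem_Ico]; omega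
    rw [this, Nat.card_Ico]
  have hpt : ∀ i j : ℕ, m ≤ (min (i + j) m - (i + j + 2 - m))
      + ((m - 1 - (i + j)) + ((i + j) - (m - 1))) + 2 := by
    intro i j; omega
  have hrefl1 : ∀ i : ℕ, ∑ j ∈ range m, (m - 1 - (i + j)) = ∑ j ∈ range m, (j - i) := by
    intro i; rw [← Finset.sum_range_reflect]
    apply Finset.sum_congr rfl; intro j hj
    simp only [Finset.mem_range] at hj; omega
  have hrefl2 : ∀ i : ℕ, ∑ j ∈ range m, ((i + j) - (m - 1)) = ∑ j ∈ range m, (i - j) := by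
    intro i; rw [← Finset.sum_range_reflect]
    apply Finset.sum_congr rfl; intro j hj
    simp only [Finset.mem_range] at hj; omega
  have hsum : m * (m * m) ≤ (∑ i ∈ range m, ∑ j ∈ range m,
        ((range m).filter (fun l => l + 1 ≤ i + j ∧ i + j + 2 ≤ l + m)).card)
      + (∑ i ∈ range m, ∑ j ∈ range m, ((i - j) + (j - i))) + 2 * (m * m) := by
    calc m * (m * m) = ∑ i ∈ range m, ∑ j ∈ range m, m := by
          simp [Finset.sum_const, mul_comm]
    _ ≤ ∑ i ∈ range m, ∑ j ∈ range m,
          (((range m).filter (fun l => l + 1 ≤ i + j ∧ i + j + 2 ≤ l + m)).card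
            + ((m - 1 - (i + j)) + ((i + j) - (m - 1))) + 2) := by
          apply Finset.sum_le_sum; intro i _
          apply Finset.sum_le_sum; intro j _
          rw [hinner i j]; exact hpt i j
    _ = (∑ i ∈ range m, ∑ j ∈ range m,
          ((range m).filter (fun l => l + 1 ≤ i + j ∧ i + j + 2 ≤ l + m)).card)
        + (∑ i ∈ range m, ∑ j ∈ range m, ((i - j) + (j - i))) + 2 * (m * m) := by
          simp only [Finset.sum_add_distrib, Finset.sum_const, Finset.card_range]
          rw [Finset.sum_congr rfl (fun i _ => hrefl1 i),
              Finset.sum_congr rfl (fun i _ => hrefl2 i)]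
          simp only [smul_eq_mul]
          ring
  rw [hcard]
  have hG := sumAbsG m
  set SC := ∑ i ∈ range m, ∑ j ∈ range m,
      ((range m).filter (fun l => l + 1 ≤ i + j ∧ i + j + 2 ≤ l + m)).card with hSC
  set G := ∑ i ∈ range m, ∑ j ∈ range m, ((i - j) + (j - i)) with hGdef
  nlinarith [hG, hsum]

def rr (k : ℕ) (a : ZMod k) : ℕ := if a.val = 0 then k else a.val

lemma rr_pos (k : ℕ) (a : ZMod k) [NeZero k] : 1 ≤ rr k a := by
  unfold rr; split
  · exact Nat.pos_of_ne_zero (NeZero.ne k)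
  · omega

lemma rr_le (k : ℕ) (a : ZMod k) [NeZero k] : rr k a ≤ k := by
  unfold rr; split
  · exact le_refl k
  · exact (ZMod.val_lt a).le

lemma rr_cast (k : ℕ) (a : ZMod k) [NeZero k] : ((rr k a : ℕ) : ZMod k) = a := by
  unfold rr
  split
  next h =>
    rw [ZMod.natCast_self]
    exact ((ZMod.val_eq_zero a).mp h).symm
  next h => rw [ZMod.natCast_val, ZMod.cast_id]

def XX (k : ℕ) (a : ZMod k) (t : ℕ) : ℕ := rr k a + t * k

lemma XX_cast (k : ℕ) (a : ZMod k) (t : ℕ) [NeZero k] : ((XX k a t : ℕ) : ZMod k) = a := by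
  unfold XX
  push_cast
  rw [ZMod.natCast_self, rr_cast]
  ring

lemma XX_pos (k : ℕ) (a : ZMod k) (t : ℕ) [NeZero k] : 1 ≤ XX k a t :=
  le_trans (rr_pos k a) (Nat.le_add_right _ _)

lemma XX_le (k m : ℕ) (a : ZMod k) (t : ℕ) [NeZero k] (ht : t < m) : XX k a t ≤ k * m := by
  have h1 : (t + 1) * k ≤ m * k := Nat.mul_le_mul_right k (by omega)
  have h2 := rr_le k a
  unfold XX
  rw [add_mul, one_mul] at h1
  rw [mul_comm k m]
  omega

lemma XX_inj (k : ℕ) (a a' : ZMod k) (t t' : ℕ) [NeZero k]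
    (h : XX k a t = XX k a' t') : a = a' ∧ t = t' := by
  have hc : a = a' := by rw [← XX_cast k a t, ← XX_cast k a' t', h]
  subst hc
  refine ⟨rfl, ?_⟩
  have hk : 0 < k := Nat.pos_of_ne_zero (NeZero.ne k)
  unfold XX at h
  have h2 : t * k = t' * k := by omega
  exact Nat.eq_of_mul_eq_mul_right hk h2

lemma X2_facts (k m : ℕ) [NeZero k] (a b c d : ZMod k) (hsum : a + b = c + d)
    (i j l : ℕ) (h1 : l + 1 ≤ i + j) (h2 : i + j + 2 ≤ l + m) :
    XX k a l + (XX k c i + XX k d j - XX k a l) = XX k c i + XX k d j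
    ∧ 1 ≤ XX k c i + XX k d j - XX k a l
    ∧ XX k c i + XX k d j - XX k a l ≤ k * m
    ∧ (((XX k c i + XX k d j - XX k a l : ℕ)) : ZMod k) = b := by
  have hk : 0 < k := Nat.pos_of_ne_zero (NeZero.ne k)
  have e1 : (l + 1) * k ≤ (i + j) * k := Nat.mul_le_mul_right k h1
  have e2 : (i + j + 2) * k ≤ (l + m) * k := Nat.mul_le_mul_right k h2
  have expand1 : (l + 1) * k = l * k + k := by ring
  have expand2 : (i + j) * k = i * k + j * k := by ring
  have expand3 : (i + j + 2) * k = i * k + j * k + 2 * k := by ring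
  have expand4 : (l + m) * k = l * k + m * k := by ring
  rw [expand1, expand2] at e1
  rw [expand3, expand4] at e2
  have ra1 := rr_pos k a; have ra2 := rr_le k a
  have rc1 := rr_pos k c; have rc2 := rr_le k c
  have rd1 := rr_pos k d; have rd2 := rr_le k d
  unfold XX
  have hmk : k * m = m * k := mul_comm k m
  refine ⟨by omega, by omega, by omega, ?_⟩
  have hident : rr k a + l * k + (rr k c + i * k + (rr k d + j * k) - (rr k a + l * k))
      = rr k c + i * k + (rr k d + j * k) := by omega
  have hcast := congrArg (fun t : ℕ => (t : ZMod k)) hident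
  push_cast at hcast
  rw [ZMod.natCast_self, rr_cast, rr_cast, rr_cast] at hcast
  simp only [mul_zero, add_zero] at hcast
  have : a + (((rr k c + i * k + (rr k d + j * k) - (rr k a + l * k) : ℕ)) : ZMod k) = a + b := by
    rw [hsum]; linear_combination hcast
  exact add_left_cancel this

set_option maxHeartbeats 2000000 in
theorem stmt_17 (k : ℕ) (hk : 4 ≤ k) :
    ∃ C : ℝ, ∀ n : ℕ, k ≤ n → k ∣ n →
      (({S : Finset ℕ | IsSidonFourSet n S ∧
          Set.InjOn (fun i => i % k) (S : Set ℕ)}.ncard : ℝ)) ≥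
        2 * (({q : Sym2 (Sym2 (ZMod k)) | ∃ a b c d : ZMod k,
            q = s(s(a, b), s(c, d)) ∧
            a ≠ b ∧ a ≠ c ∧ a ≠ d ∧ b ≠ c ∧ b ≠ d ∧ c ≠ d ∧
            a + b = c + d}.ncard : ℝ)) *
          ((n : ℝ) ^ 3 / (3 * (k : ℝ) ^ 3) - C * n ^ 2) := by
  classical
  refine ⟨1, fun n hkn hdvd => ?_⟩
  haveI : NeZero k := ⟨by omega⟩
  have hk0 : 0 < k := by omega
  set m := n / k with hmdef
  have hn : n = k * m := (Nat.mul_div_cancel' hdvd).symm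
  set Sfin : Finset (Sym2 (Sym2 (ZMod k))) :=
    Finset.univ.filter (fun q => ∃ a b c d : ZMod k,
      q = s(s(a, b), s(c, d)) ∧
      a ≠ b ∧ a ≠ c ∧ a ≠ d ∧ b ≠ c ∧ b ≠ d ∧ c ≠ d ∧ a + b = c + d) with hSfin
  have hMeq : ({q : Sym2 (Sym2 (ZMod k)) | ∃ a b c d : ZMod k,
      q = s(s(a, b), s(c, d)) ∧
      a ≠ b ∧ a ≠ c ∧ a ≠ d ∧ b ≠ c ∧ b ≠ d ∧ c ≠ d ∧
      a + b = c + d}.ncard) = Sfin.card := by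
    rw [show {q : Sym2 (Sym2 (ZMod k)) | ∃ a b c d : ZMod k,
      q = s(s(a, b), s(c, d)) ∧
      a ≠ b ∧ a ≠ c ∧ a ≠ d ∧ b ≠ c ∧ b ≠ d ∧ c ≠ d ∧
      a + b = c + d} = (↑Sfin : Set _) from by ext q; simp [hSfin]]
    exact Set.ncard_coe_finset _
  have hW : ∀ q ∈ Sfin, ∃ a b c d : ZMod k,
      q = s(s(a, b), s(c, d)) ∧ a ≠ b ∧ a ≠ c ∧ a ≠ d ∧ b ≠ c ∧ b ≠ d ∧ c ≠ d ∧ a + b = c + d :=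
    fun q hq => (Finset.mem_filter.mp hq).2
  choose A B Cc D hw using hW
  set f : {q // q ∈ Sfin} × (Σ _ : ℕ × ℕ, ℕ) → Finset ℕ := fun p =>
    {XX k (Cc p.1.1 p.1.2) p.2.1.1, XX k (D p.1.1 p.1.2) p.2.1.2,
     XX k (A p.1.1 p.1.2) p.2.2,
     XX k (Cc p.1.1 p.1.2) p.2.1.1 + XX k (D p.1.1 p.1.2) p.2.1.2
       - XX k (A p.1.1 p.1.2) p.2.2} with hf
  -- membership of images in the target set
  have hmem : ∀ p ∈ Sfin.attach ×ˢ Rsig m,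
      f p ∈ {S : Finset ℕ | IsSidonFourSet n S ∧ Set.InjOn (fun i => i % k) (S : Set ℕ)} := by
    rintro ⟨⟨q, hq⟩, ⟨⟨i, j⟩, l⟩⟩ hp
    rw [Finset.mem_product] at hp
    obtain ⟨-, hR⟩ := hp
    rw [Rsig, Finset.mem_sigma, Finset.mem_product, Finset.mem_filter] at hR
    obtain ⟨⟨hi, hj⟩, hl, hc1, hc2⟩ := hR
    rw [Finset.mem_range] at hi hj hl
    obtain ⟨hqe, hab, hac, had, hbc, hbd, hcd, hsum⟩ := hw q hq
    obtain ⟨hsum4, hX2pos, hX2le, hX2cast⟩ :=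
      X2_facts k m (A q hq) (B q hq) (Cc q hq) (D q hq) hsum i j l hc1 hc2
    simp only [hf, Set.mem_setOf_eq]
    set E1 := XX k (Cc q hq) i with hE1
    set E2 := XX k (D q hq) j with hE2
    set E3 := XX k (A q hq) l with hE3
    set E4 := E1 + E2 - E3 with hE4
    have g1 : ((E1 : ℕ) : ZMod k) = Cc q hq := XX_cast k _ i
    have g2 : ((E2 : ℕ) : ZMod k) = D q hq := XX_cast k _ j
    have g3 : ((E3 : ℕ) : ZMod k) = A q hq := XX_cast k _ l
    have g4 : ((E4 : ℕ) : ZMod k) = B q hq := hX2cast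
    have ne12 : E1 ≠ E2 := fun h => hcd (by rw [← g1, ← g2, h])
    have ne13 : E1 ≠ E3 := fun h => hac (by rw [← g1, ← g3, h])
    have ne14 : E1 ≠ E4 := fun h => hbc (by rw [← g1, ← g4, h])
    have ne23 : E2 ≠ E3 := fun h => had (by rw [← g2, ← g3, h])
    have ne24 : E2 ≠ E4 := fun h => hbd (by rw [← g2, ← g4, h])
    have ne34 : E3 ≠ E4 := fun h => hab (by rw [← g3, ← g4, h])
    have u1 : E1 ≤ n := by rw [hn]; exact XX_le k m _ i hi
    have u2 : E2 ≤ n := by rw [hn]; exact XX_le k m _ j hj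
    have u3 : E3 ≤ n := by rw [hn]; exact XX_le k m _ l hl
    have u4 : E4 ≤ n := by rw [hn]; exact hX2le
    have p1 : 1 ≤ E1 := XX_pos k _ i
    have p2 : 1 ≤ E2 := XX_pos k _ j
    have p3 : 1 ≤ E3 := XX_pos k _ l
    have p4 : 1 ≤ E4 := hX2pos
    refine ⟨⟨?_, E3, E4, E1, E2, ?_, ne34, ne13.symm, ne23.symm, ne14.symm, ne24.symm, ne12,
        by omega⟩, ?_⟩
    · intro x hx
      simp only [Finset.coe_insert, Set.mem_insert_iff, Finset.coe_singleton,
        Set.mem_singleton_iff] at hx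
      rcases hx with rfl|rfl|rfl|rfl <;> exact Set.mem_Icc.mpr ⟨by omega, by omega⟩
    · ext t
      simp only [Finset.mem_insert, Finset.mem_singleton]
      tauto
    · intro x hx y hy hxy
      simp only [Finset.coe_insert, Set.mem_insert_iff, Finset.coe_singleton,
        Set.mem_singleton_iff] at hx hy
      simp only at hxy
      have hcast : ((x : ℕ) : ZMod k) = ((y : ℕ) : ZMod k) := by
        rw [← ZMod.natCast_mod x k, ← ZMod.natCast_mod y k, hxy]
      rcases hx with rfl|rfl|rfl|rfl <;> rcases hy with rfl|rfl|rfl|rfl <;>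
        first
        | rfl
        | (exfalso
           simp only [g1, g2, g3, g4] at hcast
           first
           | exact hab hcast | exact hab hcast.symm
           | exact hac hcast | exact hac hcast.symm
           | exact had hcast | exact had hcast.symm
           | exact hbc hcast | exact hbc hcast.symm
           | exact hbd hcast | exact hbd hcast.symm
           | exact hcd hcast | exact hcd hcast.symm)
  -- injectivity
  have hinj : Set.InjOn f ↑(Sfin.attach ×ˢ Rsig m) := by
    rintro ⟨⟨q, hq⟩, ⟨⟨i, j⟩, l⟩⟩ hp ⟨⟨q', hq'⟩, ⟨⟨i', j'⟩, l'⟩⟩ hp' hfeq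
    simp only [Finset.mem_coe, Finset.mem_product] at hp hp'
    obtain ⟨-, hR⟩ := hp
    obtain ⟨-, hR'⟩ := hp'
    rw [Rsig, Finset.mem_sigma, Finset.mem_product, Finset.mem_filter] at hR hR'
    obtain ⟨⟨hi, hj⟩, hl, hc1, hc2⟩ := hR
    obtain ⟨⟨hi', hj'⟩, hl', hc1', hc2'⟩ := hR'
    rw [Finset.mem_range] at hi hj hl hi' hj' hl'
    obtain ⟨hqe, hab, hac, had, hbc, hbd, hcd, hsum⟩ := hw q hq
    obtain ⟨hqe', hab', hac', had', hbc', hbd', hcd', hsum'⟩ := hw q' hq'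
    obtain ⟨hsum4, hX2pos, hX2le, hX2cast⟩ :=
      X2_facts k m (A q hq) (B q hq) (Cc q hq) (D q hq) hsum i j l hc1 hc2
    obtain ⟨hsum4', hX2pos', hX2le', hX2cast'⟩ :=
      X2_facts k m (A q' hq') (B q' hq') (Cc q' hq') (D q' hq') hsum' i' j' l' hc1' hc2'
    simp only [hf] at hfeq
    set E1 := XX k (Cc q hq) i with hE1
    set E2 := XX k (D q hq) j with hE2
    set E3 := XX k (A q hq) l with hE3
    set E4 := E1 + E2 - E3 with hE4
    set F1 := XX k (Cc q' hq') i' with hF1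
    set F2 := XX k (D q' hq') j' with hF2
    set F3 := XX k (A q' hq') l' with hF3
    set F4 := F1 + F2 - F3 with hF4
    have g1 : ((E1 : ℕ) : ZMod k) = Cc q hq := XX_cast k _ i
    have g2 : ((E2 : ℕ) : ZMod k) = D q hq := XX_cast k _ j
    have g3 : ((E3 : ℕ) : ZMod k) = A q hq := XX_cast k _ l
    have g4 : ((E4 : ℕ) : ZMod k) = B q hq := hX2cast
    have g1' : ((F1 : ℕ) : ZMod k) = Cc q' hq' := XX_cast k _ i'
    have g2' : ((F2 : ℕ) : ZMod k) = D q' hq' := XX_cast k _ j'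
    have g3' : ((F3 : ℕ) : ZMod k) = A q' hq' := XX_cast k _ l'
    have g4' : ((F4 : ℕ) : ZMod k) = B q' hq' := hX2cast'
    have nf12 : F1 ≠ F2 := fun h => hcd' (by rw [← g1', ← g2', h])
    have nf13 : F1 ≠ F3 := fun h => hac' (by rw [← g1', ← g3', h])
    have nf14 : F1 ≠ F4 := fun h => hbc' (by rw [← g1', ← g4', h])
    have nf23 : F2 ≠ F3 := fun h => had' (by rw [← g2', ← g3', h])
    have nf24 : F2 ≠ F4 := fun h => hbd' (by rw [← g2', ← g4', h])
    have nf34 : F3 ≠ F4 := fun h => hab' (by rw [← g3', ← g4', h])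
    -- memberships of the F's in the E set
    have hmemF : ∀ x : ℕ, x ∈ ({F1, F2, F3, F4} : Finset ℕ) →
        (x = E1 ∨ x = E2 ∨ x = E3 ∨ x = E4) := by
      intro x hx
      rw [← hfeq] at hx
      simpa using hx
    have m1 : F3 = E3 ∨ F3 = E4 ∨ F3 = E1 ∨ F3 = E2 :=
      or4_perm (hmemF F3 (Finset.mem_insert_of_mem (Finset.mem_insert_of_mem (Finset.mem_insert_self _ _))))
    have m2 : F4 = E3 ∨ F4 = E4 ∨ F4 = E1 ∨ F4 = E2 :=
      or4_perm (hmemF F4 (Finset.mem_insert_of_mem (Finset.mem_insert_of_mem (Finset.mem_insert_of_mem (Finset.mem_singleton_self _)))))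
    have m3 : F1 = E3 ∨ F1 = E4 ∨ F1 = E1 ∨ F1 = E2 :=
      or4_perm (hmemF F1 (Finset.mem_insert_self _ _))
    have m4 : F2 = E3 ∨ F2 = E4 ∨ F2 = E1 ∨ F2 = E2 :=
      or4_perm (hmemF F2 (Finset.mem_insert_of_mem (Finset.mem_insert_self _ _)))
    have hpair := pairing_unique E3 E4 E1 E2 F3 F4 F1 F2
      nf34 nf13.symm nf23.symm nf14.symm nf24.symm nf12
      (by omega) (by omega) m1 m2 m3 m4
    have hqq : q = q' := by
      have hmap := congrArg (Sym2.map (Sym2.map (fun t : ℕ => (t : ZMod k)))) hpair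
      simp only [Sym2.map_pair_eq] at hmap
      rw [g1, g2, g3, g4, g1', g2', g3', g4'] at hmap
      rw [hqe, hqe']
      exact hmap
    subst hqq
    have hA : A q hq' = A q hq := rfl
    have hB : B q hq' = B q hq := rfl
    have hC : Cc q hq' = Cc q hq := rfl
    have hD : D q hq' = D q hq := rfl
    -- identify coordinates
    have hmemE : ∀ x : ℕ, x ∈ ({E1, E2, E3, E4} : Finset ℕ) →
        (x = F1 ∨ x = F2 ∨ x = F3 ∨ x = F4) := by
      intro x hx
      rw [hfeq] at hx
      simpa using hx
    have idE1 : E1 = F1 := by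
      rcases hmemE E1 (Finset.mem_insert_self _ _) with h|h|h|h
      · exact h
      · exfalso
        exact hcd (by rw [← g1, h, g2'])
      · exfalso
        refine hac ?_
        have e : Cc q hq = A q hq := by rw [← g1, h, g3']
        exact e.symm
      · exfalso
        refine hbc ?_
        have e : Cc q hq = B q hq := by rw [← g1, h, g4']
        exact e.symm
    have idE2 : E2 = F2 := by
      rcases hmemE E2 (Finset.mem_insert_of_mem (Finset.mem_insert_self _ _)) with h|h|h|h
      · exfalso
        exact hcd ((by rw [← g2, h, g1'] : D q hq = Cc q hq)).symm
      · exact h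
      · exfalso
        exact had (((by rw [← g2, h, g3']) : D q hq = A q hq)).symm
      · exfalso
        exact hbd (((by rw [← g2, h, g4']) : D q hq = B q hq)).symm
    have idE3 : E3 = F3 := by
      rcases hmemE E3 (Finset.mem_insert_of_mem (Finset.mem_insert_of_mem (Finset.mem_insert_self _ _))) with h|h|h|h
      · exfalso
        exact hac (by rw [← g3, h, g1'])
      · exfalso
        exact had (by rw [← g3, h, g2'])
      · exact h
      · exfalso
        exact hab (by rw [← g3, h, g4'])
    rw [hE1, hF1] at idE1
    rw [hE2, hF2] at idE2
    rw [hE3, hF3] at idE3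
    obtain ⟨-, rfl⟩ := XX_inj k _ _ _ _ idE1
    obtain ⟨-, rfl⟩ := XX_inj k _ _ _ _ idE2
    obtain ⟨-, rfl⟩ := XX_inj k _ _ _ _ idE3
    exact Prod.ext (Subtype.ext rfl) rfl
  -- now count
  have himg : (Finset.image f (Sfin.attach ×ˢ Rsig m)).card = Sfin.card * (Rsig m).card := by
    rw [Finset.card_image_of_injOn hinj, Finset.card_product, Finset.card_attach]
  have hfinite : {S : Finset ℕ | IsSidonFourSet n S ∧
      Set.InjOn (fun i => i % k) (S : Set ℕ)}.Finite := by
    apply Set.Finite.subset ((Finset.Icc 1 n).powerset : Finset (Finset ℕ)).finite_toSet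
    intro S hS
    simp only [Set.mem_setOf_eq] at hS
    simp only [Finset.mem_coe, Finset.mem_powerset]
    intro x hx
    have := hS.1.1 (Finset.mem_coe.mpr hx)
    exact Finset.mem_Icc.mpr ⟨this.1, this.2⟩
  have hsub : ↑(Finset.image f (Sfin.attach ×ˢ Rsig m)) ⊆
      {S : Finset ℕ | IsSidonFourSet n S ∧ Set.InjOn (fun i => i % k) (S : Set ℕ)} := by
    intro S hS
    simp only [Finset.coe_image, Set.mem_image, Finset.mem_coe] at hS
    obtain ⟨p, hp, rfl⟩ := hS
    exact hmem p hp
  have hcount : (Sfin.card * (Rsig m).card : ℕ) ≤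
      {S : Finset ℕ | IsSidonFourSet n S ∧ Set.InjOn (fun i => i % k) (S : Set ℕ)}.ncard := by
    rw [← himg, ← Set.ncard_coe_finset]
    exact Set.ncard_le_ncard hsub hfinite
  rw [hMeq, ge_iff_le]
  have hRge := Rsig_card m
  have hnR : (n:ℝ) = (k:ℝ) * (m:ℝ) := by rw [hn]; push_cast; ring
  have hkR : (0:ℝ) < (k:ℝ) := by exact_mod_cast hk0
  have hfrac : (n:ℝ)^3/(3*(k:ℝ)^3) = (m:ℝ)^3/3 := by rw [hnR]; field_simp
  have hmn : (m:ℝ) ≤ (n:ℝ) := by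
    have : m ≤ n := by rw [hn]; exact Nat.le_mul_of_pos_left m hk0
    exact_mod_cast this
  have hm0 : (0:ℝ) ≤ (m:ℝ) := Nat.cast_nonneg m
  have hRreal : 2 * ((n:ℝ)^3/(3*(k:ℝ)^3) - 1 * (n:ℝ)^2) ≤ ((Rsig m).card : ℝ) := by
    rw [hfrac]
    have h1 : (2:ℝ) * ((m:ℝ)*(m:ℝ)*(m:ℝ)) ≤ 3 * (((Rsig m).card : ℕ) : ℝ)
        + 6 * ((m:ℝ)*(m:ℝ)) := by exact_mod_cast hRge
    have h2 : (m:ℝ)^2 ≤ (n:ℝ)^2 := by nlinarith [hmn, hm0]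
    nlinarith [h1, h2]
  calc 2 * ((Sfin.card : ℕ) : ℝ) * ((n:ℝ)^3/(3*(k:ℝ)^3) - 1*(n:ℝ)^2)
      = ((Sfin.card : ℕ) : ℝ) * (2 * ((n:ℝ)^3/(3*(k:ℝ)^3) - 1*(n:ℝ)^2)) := by ring
    _ ≤ ((Sfin.card : ℕ) : ℝ) * (((Rsig m).card : ℕ) : ℝ) :=
        mul_le_mul_of_nonneg_left hRreal (Nat.cast_nonneg _)
    _ ≤ _ := by exact_mod_cast hcount
end
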